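/- Let g, h₁, h₂ > 0. The minimizer of (2^(R-1))/(κ g²) + 1/(τ₁ h₂²) + 1/(τ₂ h₁²) subject to κ + τ₁ + τ₂ = 1 (all positive) is κ = √(η 2^(R-1))/(√(η 2^(R-1)) + 1), τ = 1/(√(η 2^(R-1)) + 1), τₖ = τ hₖ/(h₁ + h₂), where η = h₁² h₂² /(g² (h₁ + h₂)²) and τ = τ₁ + τ₂. -/
import Mathlib

lemma key_ineq (a S w : ℝ) (hw : 0 < w) : 2*a*S - S^2*w ≤ a^2/w := by
  rw [le_div_iff₀ hw]
  nlinarith [sq_nonneg (a - S*w)]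

set_option maxHeartbeats 1000000 in
/-- Theorem 2 of the paper: the minimizer of
`2^(R-1)/(κ g²) + 1/(τ₁ h₂²) + 1/(τ₂ h₁²)` subject to `κ + τ₁ + τ₂ = 1` is
`κ = √(η 2^(R-1))/(√(η 2^(R-1))+1)`, `τ = 1/(√(η 2^(R-1))+1)`, `τₖ = τ hₖ/(h₁+h₂)`,
where `η = h₁²h₂²/(g²(h₁+h₂)²)`. -/
theorem stmt_6 (R : ℕ) (hR : 1 ≤ R) (g h₁ h₂ : ℝ) (hg : 0 < g) (hh₁ : 0 < h₁)
    (hh₂ : 0 < h₂) :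
    let η := h₁ ^ 2 * h₂ ^ 2 / (g ^ 2 * (h₁ + h₂) ^ 2)
    let κ := Real.sqrt (η * 2 ^ (R - 1)) / (Real.sqrt (η * 2 ^ (R - 1)) + 1)
    let τ := 1 / (Real.sqrt (η * 2 ^ (R - 1)) + 1)
    let τ₁ := τ * h₁ / (h₁ + h₂)
    let τ₂ := τ * h₂ / (h₁ + h₂)
    0 < κ ∧ 0 < τ₁ ∧ 0 < τ₂ ∧ κ + τ₁ + τ₂ = 1 ∧
    ∀ κ' τ₁' τ₂' : ℝ, 0 < κ' → 0 < τ₁' → 0 < τ₂' → κ' + τ₁' + τ₂' = 1 →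
      (2:ℝ) ^ (R - 1) / (κ * g ^ 2) + 1 / (τ₁ * h₂ ^ 2) + 1 / (τ₂ * h₁ ^ 2)
      ≤ (2:ℝ) ^ (R - 1) / (κ' * g ^ 2) + 1 / (τ₁' * h₂ ^ 2) + 1 / (τ₂' * h₁ ^ 2) := by
  intro η κ τ τ₁ τ₂
  have hsum : 0 < h₁ + h₂ := by linarith
  set s : ℝ := Real.sqrt ((2:ℝ) ^ (R - 1)) with hs_def
  have hs : 0 < s := Real.sqrt_pos.mpr (by positivity)
  have hs2 : s ^ 2 = (2:ℝ) ^ (R - 1) := Real.sq_sqrt (by positivity)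
  -- the square root simplifies
  have hsqrt : Real.sqrt (η * 2 ^ (R - 1)) = s * (h₁ * h₂) / (g * (h₁ + h₂)) := by
    have : η * 2 ^ (R - 1) = (s * (h₁ * h₂) / (g * (h₁ + h₂))) ^ 2 := by
      show h₁ ^ 2 * h₂ ^ 2 / (g ^ 2 * (h₁ + h₂) ^ 2) * 2 ^ (R - 1) = _
      rw [← hs2]; field_simp
    rw [this, Real.sqrt_sq (by positivity)]
  have hp : 0 < s * (h₁ * h₂) / (g * (h₁ + h₂)) := by positivity
  set p : ℝ := s * (h₁ * h₂) / (g * (h₁ + h₂)) with hp_def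
  have hD : 0 < p + 1 := by linarith
  have hκ : κ = p / (p + 1) := by
    show Real.sqrt (η * 2 ^ (R - 1)) / (Real.sqrt (η * 2 ^ (R - 1)) + 1) = p / (p + 1)
    rw [hsqrt]
  have hτ : τ = 1 / (p + 1) := by
    show 1 / (Real.sqrt (η * 2 ^ (R - 1)) + 1) = 1 / (p + 1)
    rw [hsqrt]
  have hτ₁ : τ₁ = 1 / (p + 1) * h₁ / (h₁ + h₂) := by
    show τ * h₁ / (h₁ + h₂) = _
    rw [hτ]
  have hτ₂ : τ₂ = 1 / (p + 1) * h₂ / (h₁ + h₂) := by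
    show τ * h₂ / (h₁ + h₂) = _
    rw [hτ]
  have hκpos : 0 < κ := by rw [hκ]; positivity
  have hτ₁pos : 0 < τ₁ := by rw [hτ₁]; positivity
  have hτ₂pos : 0 < τ₂ := by rw [hτ₂]; positivity
  have hconstr : κ + τ₁ + τ₂ = 1 := by
    rw [hκ, hτ₁, hτ₂]; field_simp; ring
  refine ⟨hκpos, hτ₁pos, hτ₂pos, hconstr, ?_⟩
  intro κ' τ₁' τ₂' hκ' hτ₁' hτ₂' hsum'
  set S : ℝ := s / g + 1 / h₂ + 1 / h₁ with hS_def
  have hSpos : 0 < S := by positivity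
  -- value at the candidate point equals S^2
  have hval : (2:ℝ) ^ (R - 1) / (κ * g ^ 2) + 1 / (τ₁ * h₂ ^ 2) + 1 / (τ₂ * h₁ ^ 2)
      = S ^ 2 := by
    rw [hκ, hτ₁, hτ₂, ← hs2, hS_def, hp_def]
    field_simp
    ring
  -- lower bound for any feasible point
  have e1 : (2:ℝ) ^ (R - 1) / (κ' * g ^ 2) = (s / g) ^ 2 / κ' := by
    rw [← hs2]; field_simp
  have e2 : 1 / (τ₁' * h₂ ^ 2) = (1 / h₂) ^ 2 / τ₁' := by field_simp
  have e3 : 1 / (τ₂' * h₁ ^ 2) = (1 / h₁) ^ 2 / τ₂' := by field_simp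
  have k1 := key_ineq (s / g) S κ' hκ'
  have k2 := key_ineq (1 / h₂) S τ₁' hτ₁'
  have k3 := key_ineq (1 / h₁) S τ₂' hτ₂'
  rw [hval, e1, e2, e3]
  nlinarith [k1, k2, k3, hsum', hSpos]
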